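/- Let (Ω, 𝒜, P) be a probability space, 𝒢 ⊆ 𝒜 a sub-σ-algebra, h > 0, λ > 0, k ∈ ℝ, L_f ≥ 0, L_v ≥ 0, ε ≥ 0. Let Y' : Ω → ℝ be square-integrable, let ΔW : Ω → ℝ^d have square-integrable components with E[ΔWⁱ | 𝒢] = 0 and E[ΔWⁱ·ΔWʲ | 𝒢] = h if i = j and 0 otherwise, almost surely (1 ≤ i, j ≤ d). Let φ, ψ : Ω → ℝ be 𝒢-measurable and square-integrable, define Y := E[Y' | 𝒢] + h·(φ + ψ) and Zⁱ := h⁻¹·E[Y'·ΔWⁱ | 𝒢] for 1 ≤ i ≤ d, and assume E[φ·Y] ≤ k·E[Y²] and E[ψ²] ≤ L_v·ε + L_f·E[|Z|²], where |Z|² = Σ_{i=1}^d (Zⁱ)². Then E[(Y')²] ≥ (1 − h·(2k + λ))·E[Y²] + h·(1 − λ⁻¹·L_f)·E[|Z|²] − h·λ⁻¹·L_v·ε. -/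

import Mathlib

/-!
Write `U = E[Y' | 𝒢]` and `V = Y' - U`, so that `E[Y'²] = E[U²] + E[V²]`. Since `E[ΔWⁱ | 𝒢] = 0`,
`h Zⁱ = E[V ΔWⁱ | 𝒢]`, and the conditional orthogonality `E[ΔWⁱ ΔWʲ | 𝒢] = h δᵢⱼ` yields the
conditional Bessel inequality `h E[|Z|²] ≤ E[V²]`: expand `0 ≤ E[(V - ∑ ζᵢ ΔWⁱ)²]` for bounded
`𝒢`-measurable `ζᵢ` (truncations of `Zⁱ`) and pass to the limit by monotone convergence.
Finally `U = Y - h (φ + ψ)`, and Young's inequality `2 ψ Y ≤ λ Y² + λ⁻¹ ψ²` bounds `E[U²]` below by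
`(1 - h (2k + λ)) E[Y²] - h λ⁻¹ E[ψ²]`.
-/

open MeasureTheory Finset Filter ProbabilityTheory Topology

section

variable {Ω : Type*} {m m0 : MeasurableSpace Ω} {μ : Measure[m0] Ω}

theorem integral_sq_eq_integral_sq_condExp_add [IsFiniteMeasure μ] (hm : m ≤ m0) {X : Ω → ℝ}
    (hX : MemLp X 2 μ) :
    ∫ ω, X ω ^ 2 ∂μ = ∫ ω, μ[X|m] ω ^ 2 ∂μ + ∫ ω, (X ω - μ[X|m] ω) ^ 2 ∂μ := by
  have hcondVar : ∫ ω, (X ω - μ[X|m] ω) ^ 2 ∂μ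
      = ∫ ω, X ω ^ 2 ∂μ - ∫ ω, μ[X|m] ω ^ 2 ∂μ :=
    calc ∫ ω, (X ω - μ[X|m] ω) ^ 2 ∂μ = ∫ ω, Var[X; μ | m] ω ∂μ := (integral_condExp hm).symm
      _ = ∫ ω, (μ[X ^ 2|m] - μ[X|m] ^ 2 : Ω → ℝ) ω ∂μ :=
        integral_congr_ae (condVar_ae_eq_condExp_sq_sub_sq_condExp hm hX)
      _ = ∫ ω, X ω ^ 2 ∂μ - ∫ ω, μ[X|m] ω ^ 2 ∂μ := by
        simp only [Pi.sub_apply, Pi.pow_apply]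
        rw [integral_sub integrable_condExp (hX.condExp one_le_two).integrable_sq,
          integral_condExp hm]
        rfl
  linarith

theorem integral_sub_sq {V W : Ω → ℝ} (hV : MemLp V 2 μ) (hW : MemLp W 2 μ) :
    ∫ ω, (V ω - W ω) ^ 2 ∂μ
      = ∫ ω, V ω ^ 2 ∂μ - 2 * ∫ ω, V ω * W ω ∂μ + ∫ ω, W ω ^ 2 ∂μ := by
  have hVW : Integrable (fun ω => V ω * W ω) μ := hV.integrable_mul hW
  have hV2VW : Integrable (fun ω => V ω ^ 2 - 2 * (V ω * W ω)) μ :=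
    hV.integrable_sq.sub (hVW.const_mul 2)
  calc ∫ ω, (V ω - W ω) ^ 2 ∂μ = ∫ ω, (V ω ^ 2 - 2 * (V ω * W ω)) + W ω ^ 2 ∂μ := by
        congr 1; ext ω; ring
    _ = _ := by
        rw [integral_add hV2VW hW.integrable_sq, integral_sub hV.integrable_sq (hVW.const_mul 2),
          integral_const_mul]

theorem integral_mul_condExp_of_stronglyMeasurable (hm : m ≤ m0) [SigmaFinite (μ.trim hm)]
    {g f : Ω → ℝ} (hg : StronglyMeasurable[m] g) (hf : Integrable f μ)
    (hgf : Integrable (fun ω => g ω * f ω) μ) :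
    ∫ ω, g ω * μ[f|m] ω ∂μ = ∫ ω, g ω * f ω ∂μ :=
  (integral_congr_ae (condExp_mul_of_stronglyMeasurable_left hg hgf hf).symm).trans
    (integral_condExp hm)

theorem condExp_sub_condExp_mul_ae_eq [IsFiniteMeasure μ] {X e : Ω → ℝ} (hX : MemLp X 2 μ)
    (he : MemLp e 2 μ) (he0 : μ[e|m] =ᵐ[μ] 0) :
    μ[fun ω => (X ω - μ[X|m] ω) * e ω|m] =ᵐ[μ] μ[fun ω => X ω * e ω|m] := by
  have hU := hX.condExp (m := m) one_le_two
  have hUe : μ[μ[X|m] * e|m] =ᵐ[μ] 0 := by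
    filter_upwards [condExp_mul_of_stronglyMeasurable_left stronglyMeasurable_condExp
      (hU.integrable_mul he) (he.integrable one_le_two), he0] with ω hω hω0
    simp [hω, hω0]
  have hsplit : (fun ω => (X ω - μ[X|m] ω) * e ω) = X * e - μ[X|m] * e := by
    ext ω
    simp [sub_mul]
  rw [hsplit]
  filter_upwards [condExp_sub (m := m) (hX.integrable_mul he) (hU.integrable_mul he), hUe]
    with ω hω hω0
  rw [hω, Pi.sub_apply, hω0, Pi.zero_apply, sub_zero]
  rfl

theorem integral_le_of_tendsto_of_monotone {f : ℕ → Ω → ℝ} {F : Ω → ℝ} {C : ℝ} (hC : 0 ≤ C)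
    (hf : ∀ n, Integrable (f n) μ) (h_mono : ∀ᵐ ω ∂μ, Monotone fun n => f n ω)
    (h_tendsto : ∀ᵐ ω ∂μ, Tendsto (fun n => f n ω) atTop (𝓝 (F ω)))
    (h_bound : ∀ n, ∫ ω, f n ω ∂μ ≤ C) :
    ∫ ω, F ω ∂μ ≤ C := by
  by_cases hF : Integrable F μ
  · exact le_of_tendsto' (integral_tendsto_of_tendsto_of_monotone hf hF h_mono h_tendsto) h_bound
  · rw [integral_undef hF]
    exact hC

theorem le_integral_sq_sub_mul_add {Y φ ψ : Ω → ℝ} (hY : MemLp Y 2 μ) (hφ : MemLp φ 2 μ)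
    (hψ : MemLp ψ 2 μ) {h lam : ℝ} (hh : 0 ≤ h) (hlam : 0 < lam) :
    (1 - h * lam) * ∫ ω, Y ω ^ 2 ∂μ - 2 * h * ∫ ω, φ ω * Y ω ∂μ - h * lam⁻¹ * ∫ ω, ψ ω ^ 2 ∂μ
      ≤ ∫ ω, (Y ω - h * (φ ω + ψ ω)) ^ 2 ∂μ := by
  have hpt : ∀ ω, (1 - h * lam) * Y ω ^ 2 - 2 * h * (φ ω * Y ω) - h * lam⁻¹ * ψ ω ^ 2
      ≤ (Y ω - h * (φ ω + ψ ω)) ^ 2 := fun ω => by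
    have hgap : (Y ω - h * (φ ω + ψ ω)) ^ 2
        - ((1 - h * lam) * Y ω ^ 2 - 2 * h * (φ ω * Y ω) - h * lam⁻¹ * ψ ω ^ 2)
        = h ^ 2 * (φ ω + ψ ω) ^ 2 + h * lam⁻¹ * (lam * Y ω - ψ ω) ^ 2 := by
      field_simp
      ring
    have : 0 ≤ h ^ 2 * (φ ω + ψ ω) ^ 2 + h * lam⁻¹ * (lam * Y ω - ψ ω) ^ 2 := by positivity
    linarith
  have hY2 : Integrable (fun ω => (1 - h * lam) * Y ω ^ 2) μ :=
    hY.integrable_sq.const_mul _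
  have hφY : Integrable (fun ω => 2 * h * (φ ω * Y ω)) μ :=
    (hφ.integrable_mul hY).const_mul _
  have hψ2 : Integrable (fun ω => h * lam⁻¹ * ψ ω ^ 2) μ := hψ.integrable_sq.const_mul _
  have hYφY : Integrable (fun ω => (1 - h * lam) * Y ω ^ 2 - 2 * h * (φ ω * Y ω)) μ :=
    hY2.sub hφY
  calc (1 - h * lam) * ∫ ω, Y ω ^ 2 ∂μ - 2 * h * ∫ ω, φ ω * Y ω ∂μ
        - h * lam⁻¹ * ∫ ω, ψ ω ^ 2 ∂μ
      = ∫ ω, (1 - h * lam) * Y ω ^ 2 - 2 * h * (φ ω * Y ω) - h * lam⁻¹ * ψ ω ^ 2 ∂μ := by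
        rw [integral_sub hYφY hψ2, integral_sub hY2 hφY, integral_const_mul,
          integral_const_mul, integral_const_mul]
    _ ≤ ∫ ω, (Y ω - h * (φ ω + ψ ω)) ^ 2 ∂μ :=
        integral_mono (hYφY.sub hψ2) (hY.sub ((hφ.add hψ).const_mul h)).integrable_sq hpt

theorem MeasureTheory.Integrable.bdd_mul_of_stronglyMeasurable (hm : m ≤ m0) {C : ℝ} {g f : Ω → ℝ}
    (hg : StronglyMeasurable[m] g) (hgC : ∀ ω, |g ω| ≤ C) (hf : Integrable f μ) :
    Integrable (fun ω => g ω * f ω) μ :=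
  hf.bdd_mul (hg.mono hm).aestronglyMeasurable (ae_of_all _ hgC)

variable {ι : Type*} [Fintype ι]

theorem integral_sum_mul_condExp_of_stronglyMeasurable (hm : m ≤ m0) [SigmaFinite (μ.trim hm)]
    {g f : ι → Ω → ℝ} (hg : ∀ i, StronglyMeasurable[m] (g i)) (hf : ∀ i, Integrable (f i) μ)
    (hgf : ∀ i, Integrable (fun ω => g i ω * f i ω) μ)
    (hgf' : ∀ i, Integrable (fun ω => g i ω * μ[f i|m] ω) μ) :
    ∫ ω, ∑ i, g i ω * μ[f i|m] ω ∂μ = ∫ ω, ∑ i, g i ω * f i ω ∂μ := by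
  rw [integral_finsetSum _ fun i _ => hgf' i, integral_finsetSum _ fun i _ => hgf i]
  exact Finset.sum_congr rfl fun i _ =>
    integral_mul_condExp_of_stronglyMeasurable hm (hg i) (hf i) (hgf i)

theorem integral_sq_sum_mul_eq_mul_integral_sum_sq [DecidableEq ι] [IsFiniteMeasure μ]
    (hm : m ≤ m0) {C c : ℝ} {ζ e : ι → Ω → ℝ} (hζ : ∀ i, StronglyMeasurable[m] (ζ i))
    (hζC : ∀ i ω, |ζ i ω| ≤ C) (he : ∀ i, MemLp (e i) 2 μ)
    (hcov : ∀ i j, μ[fun ω => e i ω * e j ω|m] =ᵐ[μ] fun _ => if i = j then c else 0) :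
    ∫ ω, (∑ i, ζ i ω * e i ω) ^ 2 ∂μ = c * ∫ ω, ∑ i, ζ i ω ^ 2 ∂μ := by
  have hbdd : ∀ i j {f : Ω → ℝ}, Integrable f μ →
      Integrable (fun ω => (ζ i ω * ζ j ω) * f ω) μ := fun i j f hf => by
    simpa only [mul_assoc] using
      (hf.bdd_mul_of_stronglyMeasurable hm (hζ j) (hζC j)).bdd_mul_of_stronglyMeasurable hm
        (hζ i) (hζC i)
  have hee : ∀ i j, Integrable (fun ω => e i ω * e j ω) μ := fun i j =>
    (he i).integrable_mul (he j)
  have hcov' : ∀ᵐ ω ∂μ, ∀ i j, μ[fun ω => e i ω * e j ω|m] ω = if i = j then c else 0 :=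
    ae_all_iff.2 fun i => ae_all_iff.2 fun j => hcov i j
  calc ∫ ω, (∑ i, ζ i ω * e i ω) ^ 2 ∂μ
      = ∫ ω, ∑ i, ∑ j, (ζ i ω * ζ j ω) * (e i ω * e j ω) ∂μ := by
        congr 1; ext ω
        simp only [sq, Finset.sum_mul_sum]
        exact Finset.sum_congr rfl fun i _ => Finset.sum_congr rfl fun j _ => by ring
    _ = ∫ ω, ∑ i, ∑ j, (ζ i ω * ζ j ω) * μ[fun ω => e i ω * e j ω|m] ω ∂μ := by
        rw [integral_finsetSum _ fun i _ => integrable_finsetSum _ fun j _ =>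
            hbdd i j integrable_condExp,
          integral_finsetSum _ fun i _ => integrable_finsetSum _ fun j _ => hbdd i j (hee i j)]
        exact Finset.sum_congr rfl fun i _ =>
          (integral_sum_mul_condExp_of_stronglyMeasurable hm (fun j => (hζ i).mul (hζ j))
            (hee i) (fun j => hbdd i j (hee i j)) fun j => hbdd i j integrable_condExp).symm
    _ = ∫ ω, c * ∑ i, ζ i ω ^ 2 ∂μ :=
        integral_congr_ae (hcov'.mono fun ω hω => by simp [hω, Finset.mul_sum, sq, mul_comm])
    _ = c * ∫ ω, ∑ i, ζ i ω ^ 2 ∂μ := integral_const_mul c _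

theorem two_mul_integral_sum_mul_condExp_sub_le [DecidableEq ι] [IsFiniteMeasure μ]
    (hm : m ≤ m0) {C c : ℝ} {ζ : ι → Ω → ℝ} (hζ : ∀ i, StronglyMeasurable[m] (ζ i))
    (hζC : ∀ i ω, |ζ i ω| ≤ C) {V : Ω → ℝ} {e : ι → Ω → ℝ} (hV : MemLp V 2 μ)
    (he : ∀ i, MemLp (e i) 2 μ)
    (hcov : ∀ i j, μ[fun ω => e i ω * e j ω|m] =ᵐ[μ] fun _ => if i = j then c else 0) :
    2 * ∫ ω, ∑ i, ζ i ω * μ[fun ω => V ω * e i ω|m] ω ∂μ - c * ∫ ω, ∑ i, ζ i ω ^ 2 ∂μ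
      ≤ ∫ ω, V ω ^ 2 ∂μ := by
  have hVe : ∀ i, Integrable (fun ω => V ω * e i ω) μ := fun i => hV.integrable_mul (he i)
  have hW : MemLp (fun ω => ∑ i, ζ i ω * e i ω) 2 μ := memLp_finsetSum _ fun i _ =>
    (he i).mul' (memLp_top_of_bound ((hζ i).mono hm).aestronglyMeasurable C
      (ae_of_all _ fun ω => hζC i ω))
  have hVW : ∫ ω, V ω * ∑ i, ζ i ω * e i ω ∂μ
      = ∫ ω, ∑ i, ζ i ω * μ[fun ω => V ω * e i ω|m] ω ∂μ := by
    rw [integral_sum_mul_condExp_of_stronglyMeasurable hm hζ hVe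
      (fun i => (hVe i).bdd_mul_of_stronglyMeasurable hm (hζ i) (hζC i))
      (fun i => integrable_condExp.bdd_mul_of_stronglyMeasurable hm (hζ i) (hζC i))]
    congr 1; ext ω
    rw [Finset.mul_sum]
    exact Finset.sum_congr rfl fun i _ => by ring
  have hnonneg : 0 ≤ ∫ ω, (V ω - ∑ i, ζ i ω * e i ω) ^ 2 ∂μ :=
    integral_nonneg fun ω => sq_nonneg _
  rw [integral_sub_sq hV hW, hVW,
    integral_sq_sum_mul_eq_mul_integral_sum_sq hm hζ hζC he hcov] at hnonneg
  linarith

theorem setIntegral_sum_sq_condExp_mul_le [DecidableEq ι] [IsFiniteMeasure μ] (hm : m ≤ m0)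
    {c : ℝ} (hc : 0 < c) {V : Ω → ℝ} {e : ι → Ω → ℝ} (hV : MemLp V 2 μ)
    (he : ∀ i, MemLp (e i) 2 μ)
    (hcov : ∀ i j, μ[fun ω => e i ω * e j ω|m] =ᵐ[μ] fun _ => if i = j then c else 0)
    {A : Set Ω} (hA : MeasurableSet[m] A) {N : ℝ}
    (hAN : ∀ ω ∈ A, ∑ i, μ[fun ω => V ω * e i ω|m] ω ^ 2 ≤ N) :
    ∫ ω in A, ∑ i, μ[fun ω => V ω * e i ω|m] ω ^ 2 ∂μ ≤ c * ∫ ω, V ω ^ 2 ∂μ := by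
  set g := fun i => μ[fun ω => V ω * e i ω|m]
  -- `ζᵢ` truncates the optimal test function `c⁻¹ gᵢ` to `A`, where it is bounded.
  set ζ := fun i => A.indicator fun ω => c⁻¹ * g i ω
  have hζ : ∀ i, StronglyMeasurable[m] (ζ i) := fun i =>
    (stronglyMeasurable_condExp.const_mul _).indicator hA
  have hζC : ∀ i ω, |ζ i ω| ≤ c⁻¹ * √N := fun i ω => by
    simp only [ζ]
    by_cases hω : ω ∈ A
    · rw [Set.indicator_of_mem hω, abs_mul, abs_of_pos (inv_pos.2 hc)]
      refine mul_le_mul_of_nonneg_left (Real.abs_le_sqrt ?_) (inv_pos.2 hc).le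
      exact (Finset.single_le_sum (fun j _ => sq_nonneg (g j ω)) (Finset.mem_univ i)).trans
        (hAN ω hω)
    · rw [Set.indicator_of_notMem hω, abs_zero]
      positivity
  have hζg : ∀ ω, ∑ i, ζ i ω * g i ω = c⁻¹ * A.indicator (fun ω => ∑ i, g i ω ^ 2) ω :=
    fun ω => by
      by_cases hω : ω ∈ A
      · simp [ζ, Set.indicator_of_mem hω, Finset.mul_sum, sq, mul_assoc]
      · simp [ζ, Set.indicator_of_notMem hω]
  have hζζ : ∀ ω, ∑ i, ζ i ω ^ 2 = c⁻¹ ^ 2 * A.indicator (fun ω => ∑ i, g i ω ^ 2) ω :=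
    fun ω => by
      by_cases hω : ω ∈ A
      · simp [ζ, Set.indicator_of_mem hω, Finset.mul_sum, mul_pow]
      · simp [ζ, Set.indicator_of_notMem hω]
  have key : 2 * ∫ ω, ∑ i, ζ i ω * g i ω ∂μ - c * ∫ ω, ∑ i, ζ i ω ^ 2 ∂μ
      ≤ ∫ ω, V ω ^ 2 ∂μ := two_mul_integral_sum_mul_condExp_sub_le hm hζ hζC hV he hcov
  simp only [hζg, hζζ, integral_const_mul, integral_indicator (hm _ hA)] at key
  have hcc : c * (c⁻¹ ^ 2 * ∫ ω in A, ∑ i, g i ω ^ 2 ∂μ) = c⁻¹ * ∫ ω in A, ∑ i, g i ω ^ 2 ∂μ := by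
    field_simp
  rw [← inv_mul_le_iff₀ hc]
  linarith

theorem integral_sum_sq_condExp_mul_le [DecidableEq ι] [IsFiniteMeasure μ] (hm : m ≤ m0)
    {c : ℝ} (hc : 0 < c) {V : Ω → ℝ} {e : ι → Ω → ℝ} (hV : MemLp V 2 μ)
    (he : ∀ i, MemLp (e i) 2 μ)
    (hcov : ∀ i j, μ[fun ω => e i ω * e j ω|m] =ᵐ[μ] fun _ => if i = j then c else 0) :
    ∫ ω, ∑ i, μ[fun ω => V ω * e i ω|m] ω ^ 2 ∂μ ≤ c * ∫ ω, V ω ^ 2 ∂μ := by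
  set F := fun ω => ∑ i, μ[fun ω => V ω * e i ω|m] ω ^ 2
  have hF : StronglyMeasurable[m] F :=
    Finset.stronglyMeasurable_fun_sum _ fun i _ => stronglyMeasurable_condExp.pow 2
  have hF0 : ∀ ω, 0 ≤ F ω := fun ω => Finset.sum_nonneg fun i _ => sq_nonneg _
  set A := fun N : ℕ => {ω | F ω ≤ N}
  have hA : ∀ N, MeasurableSet[m] (A N) := fun N => measurableSet_le hF.measurable measurable_const
  refine integral_le_of_tendsto_of_monotone (f := fun N => (A N).indicator F)
    (by positivity) (fun N => ?_) (ae_of_all _ fun ω N N' hNN' => ?_) (ae_of_all _ fun ω => ?_)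
    fun N => ?_
  · refine Integrable.of_bound ((hF.indicator (hA N)).mono hm).aestronglyMeasurable N
      (ae_of_all _ fun ω => ?_)
    by_cases hω : ω ∈ A N
    · rw [Set.indicator_of_mem hω, Real.norm_of_nonneg (hF0 ω)]
      exact hω
    · rw [Set.indicator_of_notMem hω, norm_zero]
      exact N.cast_nonneg
  · exact Set.indicator_le_indicator_of_subset
      (fun ω (hω : F ω ≤ N) => hω.trans (Nat.cast_le.2 hNN')) hF0 ω
  · refine tendsto_const_nhds.congr' ?_
    filter_upwards [eventually_ge_atTop ⌈F ω⌉₊] with N hN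
    exact (Set.indicator_of_mem (s := A N) (Nat.ceil_le.1 hN) F).symm
  · rw [integral_indicator (hm _ (hA N))]
    exact setIntegral_sum_sq_condExp_mul_le hm hc hV he hcov (hA N) fun ω hω => hω

theorem integral_sum_sq_condExp_mul_le_of_condExp_eq_zero [DecidableEq ι] [IsFiniteMeasure μ]
    (hm : m ≤ m0) {c : ℝ} (hc : 0 < c) {X : Ω → ℝ} {e : ι → Ω → ℝ} (hX : MemLp X 2 μ)
    (he : ∀ i, MemLp (e i) 2 μ) (he0 : ∀ i, μ[e i|m] =ᵐ[μ] 0)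
    (hcov : ∀ i j, μ[fun ω => e i ω * e j ω|m] =ᵐ[μ] fun _ => if i = j then c else 0) :
    ∫ ω, ∑ i, μ[fun ω => X ω * e i ω|m] ω ^ 2 ∂μ ≤ c * ∫ ω, (X ω - μ[X|m] ω) ^ 2 ∂μ := by
  have hcentered : ∀ᵐ ω ∂μ, ∀ i,
      μ[fun ω => (X ω - μ[X|m] ω) * e i ω|m] ω = μ[fun ω => X ω * e i ω|m] ω :=
    ae_all_iff.2 fun i => condExp_sub_condExp_mul_ae_eq hX (he i) (he0 i)
  calc ∫ ω, ∑ i, μ[fun ω => X ω * e i ω|m] ω ^ 2 ∂μ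
      = ∫ ω, ∑ i, μ[fun ω => (X ω - μ[X|m] ω) * e i ω|m] ω ^ 2 ∂μ :=
        integral_congr_ae (hcentered.mono fun ω hω => by simp only [hω])
    _ ≤ c * ∫ ω, (X ω - μ[X|m] ω) ^ 2 ∂μ :=
        integral_sum_sq_condExp_mul_le hm hc (hX.sub (hX.condExp one_le_two)) he hcov

end

theorem one_step_stability_estimate_general
    {Ω : Type*} {m0 : MeasurableSpace Ω} (P : Measure Ω) [IsProbabilityMeasure P]
    (𝒢 : MeasurableSpace Ω) (h𝒢 : 𝒢 ≤ m0)
    (h lam : ℝ) (hh : 0 < h) (hlam : 0 < lam)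
    (k L_f L_v ε : ℝ)
    (d : ℕ)
    (Y' : Ω → ℝ) (hY' : MemLp Y' 2 P)
    (ΔW : Ω → Fin d → ℝ)
    (hΔW2 : ∀ i, MemLp (fun ω => ΔW ω i) 2 P)
    (hmean : ∀ i, P[(fun ω => ΔW ω i) | 𝒢] =ᵐ[P] 0)
    (hcov : ∀ i j, P[(fun ω => ΔW ω i * ΔW ω j) | 𝒢]
        =ᵐ[P] fun _ => if i = j then h else 0)
    (φ ψ : Ω → ℝ)
    (hφ2 : MemLp φ 2 P) (hψ2 : MemLp ψ 2 P)
    (Y : Ω → ℝ) (hY : Y = fun ω => (P[Y' | 𝒢]) ω + h * (φ ω + ψ ω))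
    (Z : Ω → Fin d → ℝ)
    (hZ : ∀ i, (fun ω => Z ω i)
        = fun ω => h⁻¹ * (P[(fun ω' => Y' ω' * ΔW ω' i) | 𝒢]) ω)
    (hmono : (∫ ω, φ ω * Y ω ∂P) ≤ k * ∫ ω, (Y ω) ^ 2 ∂P)
    (hpsi : (∫ ω, (ψ ω) ^ 2 ∂P) ≤ L_v * ε + L_f * ∫ ω, (∑ i, (Z ω i) ^ 2) ∂P) :
    (1 - h * (2 * k + lam)) * (∫ ω, (Y ω) ^ 2 ∂P)
      + h * (1 - lam⁻¹ * L_f) * (∫ ω, (∑ i, (Z ω i) ^ 2) ∂P)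
      - h * lam⁻¹ * L_v * ε
    ≤ ∫ ω, (Y' ω) ^ 2 ∂P := by
  have hY2 : MemLp Y 2 P := hY ▸ (hY'.condExp one_le_two).add ((hφ2.add hψ2).const_mul h)
  have hpythagoras := integral_sq_eq_integral_sq_condExp_add h𝒢 hY'
  have hdrift : (1 - h * lam) * ∫ ω, Y ω ^ 2 ∂P - 2 * h * ∫ ω, φ ω * Y ω ∂P
      - h * lam⁻¹ * ∫ ω, ψ ω ^ 2 ∂P ≤ ∫ ω, P[Y'|𝒢] ω ^ 2 ∂P := by
    convert le_integral_sq_sub_mul_add hY2 hφ2 hψ2 hh.le hlam using 4 with ω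
    rw [hY]
    ring
  have hbessel : h * ∫ ω, ∑ i, Z ω i ^ 2 ∂P ≤ ∫ ω, (Y' ω - P[Y'|𝒢] ω) ^ 2 ∂P := by
    have hB := integral_sum_sq_condExp_mul_le_of_condExp_eq_zero (e := fun i ω => ΔW ω i)
      h𝒢 hh hY' hΔW2 hmean hcov
    have hZsq : ∀ ω, ∑ i, Z ω i ^ 2 = h⁻¹ ^ 2 * ∑ i, P[fun ω' => Y' ω' * ΔW ω' i|𝒢] ω ^ 2 :=
      fun ω => by simp only [fun i => congrFun (hZ i) ω, mul_pow, Finset.mul_sum]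
    calc h * ∫ ω, ∑ i, Z ω i ^ 2 ∂P
        = h⁻¹ * ∫ ω, ∑ i, P[fun ω' => Y' ω' * ΔW ω' i|𝒢] ω ^ 2 ∂P := by
          simp only [hZsq, integral_const_mul]
          field_simp
      _ ≤ h⁻¹ * (h * ∫ ω, (Y' ω - P[Y'|𝒢] ω) ^ 2 ∂P) :=
          mul_le_mul_of_nonneg_left hB (inv_nonneg.2 hh.le)
      _ = ∫ ω, (Y' ω - P[Y'|𝒢] ω) ^ 2 ∂P := by field_simp
  have hφY := mul_le_mul_of_nonneg_left hmono (by positivity : (0 : ℝ) ≤ 2 * h)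
  have hψ := mul_le_mul_of_nonneg_left hpsi (by positivity : 0 ≤ h * lam⁻¹)
  linarith

/-- One-step stability estimate behind the a posteriori error analysis of
the deep BSDE scheme: with `Y = E[Y'|𝒢] + h·(φ + ψ)` and `Zⁱ = h⁻¹·E[Y'·ΔWⁱ|𝒢]`, under the
one-sided condition `E[φ·Y] ≤ k·E[Y²]` and the bound `E[ψ²] ≤ L_v·ε + L_f·E[|Z|²]`, we have
`E[(Y')²] ≥ (1 − h(2k + λ))·E[Y²] + h·(1 − λ⁻¹L_f)·E[|Z|²] − h·λ⁻¹·L_v·ε`. -/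
theorem one_step_stability_estimate
    {Ω : Type*} {m0 : MeasurableSpace Ω} (P : Measure Ω) [IsProbabilityMeasure P]
    (𝒢 : MeasurableSpace Ω) (h𝒢 : 𝒢 ≤ m0)
    (h lam : ℝ) (hh : 0 < h) (hlam : 0 < lam)
    (k L_f L_v ε : ℝ) (hLf : 0 ≤ L_f) (hLv : 0 ≤ L_v) (hε : 0 ≤ ε)
    (d : ℕ) (hd : 1 ≤ d)
    (Y' : Ω → ℝ) (hY' : MemLp Y' 2 P)
    (ΔW : Ω → Fin d → ℝ)
    (hΔW2 : ∀ i, MemLp (fun ω => ΔW ω i) 2 P)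
    (hmean : ∀ i, P[(fun ω => ΔW ω i) | 𝒢] =ᵐ[P] 0)
    (hcov : ∀ i j, P[(fun ω => ΔW ω i * ΔW ω j) | 𝒢]
        =ᵐ[P] fun _ => if i = j then h else 0)
    (φ ψ : Ω → ℝ)
    (hφm : StronglyMeasurable[𝒢] φ) (hψm : StronglyMeasurable[𝒢] ψ)
    (hφ2 : MemLp φ 2 P) (hψ2 : MemLp ψ 2 P)
    (Y : Ω → ℝ) (hY : Y = fun ω => (P[Y' | 𝒢]) ω + h * (φ ω + ψ ω))
    (Z : Ω → Fin d → ℝ)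
    (hZ : ∀ i, (fun ω => Z ω i)
        = fun ω => h⁻¹ * (P[(fun ω' => Y' ω' * ΔW ω' i) | 𝒢]) ω)
    (hmono : (∫ ω, φ ω * Y ω ∂P) ≤ k * ∫ ω, (Y ω) ^ 2 ∂P)
    (hpsi : (∫ ω, (ψ ω) ^ 2 ∂P) ≤ L_v * ε + L_f * ∫ ω, (∑ i, (Z ω i) ^ 2) ∂P) :
    (1 - h * (2 * k + lam)) * (∫ ω, (Y ω) ^ 2 ∂P)
      + h * (1 - lam⁻¹ * L_f) * (∫ ω, (∑ i, (Z ω i) ^ 2) ∂P)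
      - h * lam⁻¹ * L_v * ε
    ≤ ∫ ω, (Y' ω) ^ 2 ∂P :=
  one_step_stability_estimate_general P 𝒢 h𝒢 h lam hh hlam k L_f L_v ε d Y' hY' ΔW hΔW2 hmean hcov φ
    ψ hφ2 hψ2 Y hY Z hZ hmono hpsi
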